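/- arXiv:0902.1327 — 2 statements merged into one kernel-verified Lean document; each statement's English description precedes it below -/
import Mathlib

section
/- The random graph model defined from an isolate-indifferent normalized graph parameter f with nonnegative Möbius transform by P(Gₙ = F) = f†(F) is consistent: the distribution of Gₙ with vertex n deleted equals the distribution of Gₙ₋₁. That is, for every graph F₀ on [n-1], ∑_{F on [n]: F∖{n}=F₀} f†(F) = f†(F₀). -/
open scoped Classical

/-- The Möbius transform of a graph parameter. -/
noncomputable def mobiusT (f : ∀ n, SimpleGraph (Fin n) → ℝ) {n : ℕ} (F : SimpleGraph (Fin n)) : ℝ :=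
  ∑ F' : SimpleGraph (Fin n),
    if F ≤ F' then
      (-1 : ℝ) ^ (Nat.card (F'.edgeSet \ F.edgeSet : Set (Sym2 (Fin n)))) * f n F'
    else 0

/-- Invariance under isomorphisms (on the same number of vertices). -/
def IsoInvariant (f : ∀ n, SimpleGraph (Fin n) → ℝ) : Prop :=
  ∀ (n : ℕ) (G G' : SimpleGraph (Fin n)), Nonempty (G ≃g G') → f n G = f n G'

/-- Isolate-indifferent: invariant under isomorphism and under adding an isolated vertex. -/
def IsolateIndifferent (f : ∀ n, SimpleGraph (Fin n) → ℝ) : Prop :=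
  IsoInvariant f ∧ ∀ (n : ℕ) (G : SimpleGraph (Fin n)),
    f (n + 1) (G.map Fin.castSuccEmb) = f n G

/-- Normalized: `f(K₀) = f(K₁) = 1`. -/
def Normalized (f : ∀ n, SimpleGraph (Fin n) → ℝ) : Prop :=
  f 0 ⊥ = 1 ∧ f 1 ⊥ = 1

/-!
A graph on `[n+1]` is a graph `G` on `[n]` together with the neighbourhood `s ⊆ [n]` of the
last vertex, and for `G ≤ G'`, `s ⊆ s'` the Möbius sign splits as
`(-1)^|G' \ G| * (-1)^|s' \ s|`. Summing `f†` over all extensions of `G` therefore produces,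
for each `G' ≥ G`, the alternating sums `∑_{s ⊆ s'} (-1)^|s' \ s|`, which vanish unless
`s' = ∅`. Only the extensions of the graphs `G' ≥ G` by an isolated vertex survive, and
isolate-indifference turns what remains into `f†(G)`.
-/

namespace SimpleGraph

variable {n : ℕ}

def extendLast (G : SimpleGraph (Fin n)) (s : Finset (Fin n)) : SimpleGraph (Fin (n + 1)) :=
  G.map Fin.castSuccEmb ⊔ fromEdgeSet ((fun i : Fin n => s(i.castSucc, Fin.last n)) '' s)

@[simp] lemma extendLast_adj_castSucc_castSucc (G : SimpleGraph (Fin n)) (s : Finset (Fin n))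
    (i j : Fin n) : (G.extendLast s).Adj i.castSucc j.castSucc ↔ G.Adj i j := by
  simp only [extendLast, sup_adj, map_adj]
  simp [(Fin.castSucc_ne_last _).symm]

@[simp] lemma extendLast_adj_castSucc_last (G : SimpleGraph (Fin n)) (s : Finset (Fin n))
    (i : Fin n) : (G.extendLast s).Adj i.castSucc (Fin.last n) ↔ i ∈ s := by
  simp only [extendLast, sup_adj, map_adj]
  simp [Fin.castSucc_ne_last]

@[simp] lemma extendLast_adj_last_castSucc (G : SimpleGraph (Fin n)) (s : Finset (Fin n))
    (i : Fin n) : (G.extendLast s).Adj (Fin.last n) i.castSucc ↔ i ∈ s := by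
  rw [adj_comm, extendLast_adj_castSucc_last]

@[simp] lemma comap_extendLast (G : SimpleGraph (Fin n)) (s : Finset (Fin n)) :
    (G.extendLast s).comap Fin.castSucc = G := by
  ext; simp

lemma extendLast_empty (G : SimpleGraph (Fin n)) : G.extendLast ∅ = G.map Fin.castSuccEmb := by
  simp [extendLast]

noncomputable def lastNeighbors (F : SimpleGraph (Fin (n + 1))) : Finset (Fin n) :=
  {i | F.Adj i.castSucc (Fin.last n)}

@[simp] lemma mem_lastNeighbors (F : SimpleGraph (Fin (n + 1))) (i : Fin n) :
    i ∈ F.lastNeighbors ↔ F.Adj i.castSucc (Fin.last n) := by simp [lastNeighbors]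

@[simp] lemma lastNeighbors_extendLast (G : SimpleGraph (Fin n)) (s : Finset (Fin n)) :
    (G.extendLast s).lastNeighbors = s := by
  ext; simp

lemma extendLast_comap_lastNeighbors (F : SimpleGraph (Fin (n + 1))) :
    (F.comap Fin.castSucc).extendLast F.lastNeighbors = F := by
  ext a b
  induction a using Fin.lastCases <;> induction b using Fin.lastCases <;>
    simp [adj_comm]

noncomputable def extendLastEquiv :
    SimpleGraph (Fin n) × Finset (Fin n) ≃ SimpleGraph (Fin (n + 1)) where
  toFun p := p.1.extendLast p.2
  invFun F := (F.comap Fin.castSucc, F.lastNeighbors)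
  left_inv p := by simp
  right_inv := extendLast_comap_lastNeighbors

lemma extendLast_le_extendLast_iff {G G' : SimpleGraph (Fin n)} {s s' : Finset (Fin n)} :
    G.extendLast s ≤ G'.extendLast s' ↔ G ≤ G' ∧ s ⊆ s' := by
  refine ⟨fun h => ⟨?_, fun i hi => ?_⟩, fun ⟨hG, hs⟩ => ?_⟩
  · simpa using comap_monotone Fin.castSuccEmb h
  · simpa using h ((extendLast_adj_castSucc_last G s i).2 hi)
  · unfold extendLast
    exact sup_le_sup (map_monotone _ hG) (fromEdgeSet_mono (Set.image_mono (by simpa)))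

lemma ncard_edgeSet_extendLast (G : SimpleGraph (Fin n)) (s : Finset (Fin n)) :
    (G.extendLast s).edgeSet.ncard = G.edgeSet.ncard + s.card := by
  have star_injective : Function.Injective fun i : Fin n => s(i.castSucc, Fin.last n) := by
    intro i j h
    simpa [Fin.castSucc_ne_last] using h
  have star_not_diag :
      Disjoint ((fun i : Fin n => s(i.castSucc, Fin.last n)) '' s) Sym2.diagSet := by
    rw [Set.disjoint_left]
    rintro _ ⟨i, -, rfl⟩
    simp [Fin.castSucc_ne_last]
  have disjoint : Disjoint (Fin.castSuccEmb.sym2Map '' G.edgeSet)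
      ((fun i : Fin n => s(i.castSucc, Fin.last n)) '' s) := by
    rw [Set.disjoint_left]
    rintro _ ⟨e, -, rfl⟩ ⟨i, -, h⟩
    induction e using Sym2.ind
    simp [(Fin.castSucc_ne_last _).symm] at h
  rw [extendLast, edgeSet_sup, edgeSet_map, edgeSet_fromEdgeSet, star_not_diag.sdiff_eq_left,
    Set.ncard_union_eq disjoint, Set.ncard_image_of_injective _ (Function.Embedding.injective _),
    Set.ncard_image_of_injective _ star_injective, Set.ncard_coe_finset]

lemma sum_comap_castSucc_eq_sum_extendLast {M : Type*} [AddCommMonoid M]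
    (φ : SimpleGraph (Fin (n + 1)) → M) (G : SimpleGraph (Fin n)) :
    ∑ F, (if F.comap Fin.castSucc = G then φ F else 0) = ∑ s, φ (G.extendLast s) := by
  rw [← extendLastEquiv.sum_comp, Fintype.sum_prod_type]
  simp [extendLastEquiv]

lemma natCard_edgeSet_sdiff {V : Type*} [Finite V] {G G' : SimpleGraph V} (h : G ≤ G') :
    Nat.card ↑(G'.edgeSet \ G.edgeSet) = G'.edgeSet.ncard - G.edgeSet.ncard := by
  rw [Nat.card_coe_set_eq, Set.ncard_sdiff (edgeSet_mono h)]

lemma natCard_edgeSet_extendLast_sdiff {G G' : SimpleGraph (Fin n)} {s s' : Finset (Fin n)}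
    (hG : G ≤ G') (hs : s ⊆ s') :
    Nat.card ↑((G'.extendLast s').edgeSet \ (G.extendLast s).edgeSet) =
      Nat.card ↑(G'.edgeSet \ G.edgeSet) + (s' \ s).card := by
  have hle : G.edgeSet.ncard ≤ G'.edgeSet.ncard := Set.ncard_le_ncard (edgeSet_mono hG)
  rw [natCard_edgeSet_sdiff hG, natCard_edgeSet_sdiff (extendLast_le_extendLast_iff.2 ⟨hG, hs⟩),
    ncard_edgeSet_extendLast, ncard_edgeSet_extendLast, Finset.card_sdiff_of_subset hs]
  have := Finset.card_le_card hs
  omega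

end SimpleGraph

namespace Finset

lemma sum_powerset_neg_one_pow_card_sdiff {α R : Type*} [DecidableEq α] [Ring R] (t : Finset α) :
    ∑ s ∈ t.powerset, (-1 : R) ^ #(t \ s) = if t = ∅ then 1 else 0 := by
  have h := congrArg (Int.cast : ℤ → R) (sum_powerset_neg_one_pow_card (x := t))
  push_cast at h
  rw [← h]
  exact sum_nbij' (t \ ·) (t \ ·) (by simp) (by simp)
    (fun s hs => sdiff_sdiff_eq_self (mem_powerset.1 hs))
    (fun s hs => sdiff_sdiff_eq_self (mem_powerset.1 hs)) (fun _ _ => rfl)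

lemma sum_sum_superset_neg_one_pow_card_sdiff {α R : Type*} [Fintype α] [DecidableEq α] [Ring R]
    (g : Finset α → R) : ∑ s, ∑ t with s ⊆ t, (-1 : R) ^ #(t \ s) * g t = g ∅ := by
  rw [sum_comm' (t' := univ) (s' := powerset) (by simp)]
  simp [← sum_mul, sum_powerset_neg_one_pow_card_sdiff]

end Finset

open SimpleGraph Finset

section

variable {n : ℕ}

lemma mobiusT_extendLast (f : ∀ n, SimpleGraph (Fin n) → ℝ) (G : SimpleGraph (Fin n))
    (s : Finset (Fin n)) :
    mobiusT f (G.extendLast s) = ∑ G' with G ≤ G', (-1) ^ Nat.card ↑(G'.edgeSet \ G.edgeSet) *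
      ∑ s' with s ⊆ s', (-1) ^ #(s' \ s) * f (n + 1) (G'.extendLast s') := by
  rw [mobiusT, ← extendLastEquiv.sum_comp, Fintype.sum_prod_type, sum_filter]
  refine sum_congr rfl fun G' _ => ?_
  by_cases hG : G ≤ G'
  · simp only [hG, if_true, sum_filter, mul_sum]
    refine sum_congr rfl fun s' _ => ?_
    by_cases hs : s ⊆ s'
    · simp only [extendLastEquiv, Equiv.coe_fn_mk, extendLast_le_extendLast_iff, hG, hs, and_self,
        if_true, natCard_edgeSet_extendLast_sdiff hG hs, pow_add, mul_assoc]
    · simp [extendLastEquiv, extendLast_le_extendLast_iff, hs]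
  · simp [extendLastEquiv, extendLast_le_extendLast_iff, hG]

lemma sum_mobiusT_extendLast (f : ∀ n, SimpleGraph (Fin n) → ℝ) (G : SimpleGraph (Fin n)) :
    ∑ s, mobiusT f (G.extendLast s) = ∑ G' with G ≤ G',
      (-1) ^ Nat.card ↑(G'.edgeSet \ G.edgeSet) * f (n + 1) (G'.map Fin.castSuccEmb) := by
  simp only [mobiusT_extendLast]
  rw [sum_comm]
  refine sum_congr rfl fun G' _ => ?_
  rw [← mul_sum, sum_sum_superset_neg_one_pow_card_sdiff, extendLast_empty]

end

theorem mobius_model_consistent_general (f : ∀ n, SimpleGraph (Fin n) → ℝ)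
    (hii : IsolateIndifferent f)
    (n : ℕ) (F₀ : SimpleGraph (Fin n)) :
    ∑ F : SimpleGraph (Fin (n + 1)),
      (if SimpleGraph.comap Fin.castSucc F = F₀ then mobiusT f F else 0) = mobiusT f F₀ := by
  rw [sum_comap_castSucc_eq_sum_extendLast, sum_mobiusT_extendLast, mobiusT, sum_filter]
  simp only [hii.2]

/-- The random graph model `P(Gₙ = F) = f†(F)` built from an isolate-indifferent, normalized
graph parameter with nonnegative Möbius transform is consistent: deleting the last vertex of
a random graph on `[n+1]` gives the distribution on `[n]`. -/
theorem mobius_model_consistent (f : ∀ n, SimpleGraph (Fin n) → ℝ)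
    (hii : IsolateIndifferent f) (hnorm : Normalized f)
    (hmob : ∀ (n : ℕ) (F : SimpleGraph (Fin n)), 0 ≤ mobiusT f F)
    (n : ℕ) (F₀ : SimpleGraph (Fin n)) :
    ∑ F : SimpleGraph (Fin (n + 1)),
      (if SimpleGraph.comap Fin.castSucc F = F₀ then mobiusT f F else 0) = mobiusT f F₀ :=
  mobius_model_consistent_general f hii n F₀
end

section
/- Let f be a graph parameter and k ≥ 0. The flat connection matrix M_flat(f,k) (indexed by graphs on [k], with entries f(F₁F₂) where F₁F₂ is the edge-union) is positive semidefinite if and only if f†(F) ≥ 0 for all graphs F on vertex set [k]. -/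
open scoped Classical

/-!
Let `Z` be the zeta matrix of the lattice of graphs on `[k]`, `Z F G = 1` iff `F ≤ G`.
Möbius inversion on this Boolean lattice says `f = Z f†`, so `f (F₁ ⊔ F₂) = ∑_{G ≥ F₁ ⊔ F₂} f† G`,
that is `M_flat(f, k) = Z · diag(f†) · Zᵀ`. As `Z` is unitriangular, hence invertible, this
congruence preserves positive semidefiniteness in both directions, and a diagonal matrix is
positive semidefinite iff its entries are nonnegative.
-/

open Finset Matrix

section ZetaMatrix

def zetaMatrix (R : Type*) [Zero R] [One R] (α : Type*) [LE α] [DecidableLE α] :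
    Matrix α α R :=
  of fun a c => if a ≤ c then 1 else 0

variable {α R : Type*} [Fintype α]

theorem zetaMatrix_mulVec [LE α] [DecidableLE α] [NonAssocSemiring R] (v : α → R) (a : α) :
    (zetaMatrix R α *ᵥ v) a = ∑ c, if a ≤ c then v c else 0 := by
  simp [zetaMatrix, mulVec, dotProduct]

theorem isUnit_zetaMatrix [PartialOrder α] [DecidableLE α] [DecidableEq α] [Field R] :
    IsUnit (zetaMatrix R α) := by
  refine mulVec_injective_iff_isUnit.mp fun v w hvw => funext fun a => ?_
  induction a using WellFoundedGT.induction with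
  | ind a ih =>
    have hsplit (u : α → R) :
        (zetaMatrix R α *ᵥ u) a = u a + ∑ c, if a < c then u c else 0 := by
      rw [zetaMatrix_mulVec, ← Fintype.sum_ite_eq a u, ← sum_add_distrib]
      refine sum_congr rfl fun c _ => ?_
      rcases eq_or_ne a c with rfl | hac <;> simp [le_iff_eq_or_lt, *]
    have hva := congrFun hvw a
    rwa [hsplit, hsplit, sum_congr rfl fun c _ => ite_congr rfl (ih c) fun _ => rfl,
      add_left_inj] at hva

theorem zetaMatrix_mul_diagonal_mul_transpose [SemilatticeSup α] [DecidableLE α] [DecidableEq α]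
    [CommSemiring R] (d : α → R) :
    zetaMatrix R α * diagonal d * (zetaMatrix R α)ᵀ =
      of fun a b => (zetaMatrix R α *ᵥ d) (a ⊔ b) := by
  ext a b
  rw [of_apply, zetaMatrix_mulVec, mul_apply]
  refine sum_congr rfl fun c _ => ?_
  simp only [mul_diagonal, zetaMatrix, of_apply, transpose_apply, sup_le_iff, ite_and]
  split_ifs <;> simp

theorem posSemidef_zetaMatrix_mulVec_sup_iff [SemilatticeSup α] [DecidableLE α] [DecidableEq α]
    [Field R] [PartialOrder R] [StarRing R] [StarOrderedRing R] [TrivialStar R] (d : α → R) :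
    (of fun a b => (zetaMatrix R α *ᵥ d) (a ⊔ b)).PosSemidef ↔ ∀ a, 0 ≤ d a := by
  rw [← zetaMatrix_mul_diagonal_mul_transpose, ← conjTranspose_eq_transpose_of_trivial,
    ← star_eq_conjTranspose, isUnit_zetaMatrix.posSemidef_star_right_conjugate_iff,
    posSemidef_diagonal_iff]

end ZetaMatrix

namespace SimpleGraph

variable {V R : Type*} [Fintype V] [DecidableEq V] [Ring R]

theorem image_edgeFinset_filter_le (D : SimpleGraph V) :
    (univ.filter (· ≤ D)).image (fun K => K.edgeFinset) = D.edgeFinset.powerset := by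
  ext s
  simp only [mem_image, mem_filter, mem_univ, true_and, mem_powerset]
  refine ⟨fun ⟨K, hK, hKs⟩ => hKs ▸ edgeFinset_mono hK,
    fun hs => ⟨D.deleteEdges (D.edgeSet \ s), deleteEdges_le _, ?_⟩⟩
  rw [← coe_inj, coe_edgeFinset, edgeSet_deleteEdges,
    Set.sdiff_sdiff_cancel_left (by simpa [← coe_subset] using hs)]

theorem sum_le_neg_one_pow_card_edgeSet (D : SimpleGraph V) :
    ∑ K, (if K ≤ D then (-1 : R) ^ Nat.card K.edgeSet else 0) = if D = ⊥ then 1 else 0 := by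
  calc ∑ K, (if K ≤ D then (-1 : R) ^ Nat.card K.edgeSet else 0)
      = ∑ K ∈ univ.filter (· ≤ D), (((-1 : ℤ) ^ #K.edgeFinset : ℤ) : R) := by
        simp [sum_filter, Nat.card_eq_fintype_card, edgeFinset_card]
    _ = ((∑ s ∈ D.edgeFinset.powerset, (-1 : ℤ) ^ #s : ℤ) : R) := by
        rw [← image_edgeFinset_filter_le, sum_image fun _ _ _ _ => edgeFinset_inj.mp,
          Int.cast_sum]
    _ = if D = ⊥ then 1 else 0 := by
        rw [sum_powerset_neg_one_pow_card]
        split_ifs <;> simp_all [edgeFinset_eq_empty]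

theorem sum_Icc_neg_one_pow_card_edgeSet_sdiff (G H : SimpleGraph V) :
    ∑ F, (if G ≤ F ∧ F ≤ H then (-1 : R) ^ Nat.card ↑(H.edgeSet \ F.edgeSet) else 0) =
      if G = H then 1 else 0 := by
  by_cases hGH : G ≤ H
  swap
  · rw [if_neg (fun h => hGH h.le)]
    exact sum_eq_zero fun F _ => if_neg fun h => hGH (h.1.trans h.2)
  calc ∑ F, (if G ≤ F ∧ F ≤ H then (-1 : R) ^ Nat.card ↑(H.edgeSet \ F.edgeSet) else 0)
      = ∑ F ∈ univ.filter (fun F => G ≤ F ∧ F ≤ H),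
          (-1 : R) ^ Nat.card (H \ F).edgeSet := by
        rw [sum_filter]; simp_rw [edgeSet_sdiff]
    _ = ∑ K ∈ univ.filter (· ≤ H \ G), (-1 : R) ^ Nat.card K.edgeSet := by
        refine sum_nbij' (H \ ·) (H \ ·) ?_ ?_ ?_ ?_ fun _ _ => rfl <;>
          simp only [mem_filter, mem_univ, true_and]
        · exact fun F hF => sdiff_le_sdiff_left hF.1
        · exact fun K hK =>
            ⟨le_sdiff.mpr ⟨hGH, (disjoint_sdiff_self_left.mono_left hK).symm⟩, sdiff_le⟩
        · exact fun F hF => sdiff_sdiff_eq_self hF.2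
        · exact fun K hK => sdiff_sdiff_eq_self (hK.trans sdiff_le)
    _ = if G = H then 1 else 0 := by
        rw [sum_filter, sum_le_neg_one_pow_card_edgeSet, sdiff_eq_bot_iff]
        exact if_congr ⟨fun h => le_antisymm hGH h, fun h => h.ge⟩ rfl rfl

end SimpleGraph

theorem zetaMatrix_mulVec_mobiusT (f : ∀ n, SimpleGraph (Fin n) → ℝ) (n : ℕ) :
    zetaMatrix ℝ (SimpleGraph (Fin n)) *ᵥ mobiusT f = f n := by
  funext G
  simp only [zetaMatrix_mulVec, mobiusT]
  calc ∑ F, (if G ≤ F then ∑ F', (if F ≤ F' then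
        (-1 : ℝ) ^ Nat.card ↑(F'.edgeSet \ F.edgeSet) * f n F' else 0) else 0)
      = ∑ F, ∑ F', (if G ≤ F ∧ F ≤ F' then
          (-1 : ℝ) ^ Nat.card ↑(F'.edgeSet \ F.edgeSet) else 0) * f n F' := by
        refine sum_congr rfl fun F _ => ?_
        by_cases hF : G ≤ F <;> simp [hF, ite_mul]
    _ = ∑ F', (∑ F, if G ≤ F ∧ F ≤ F' then
          (-1 : ℝ) ^ Nat.card ↑(F'.edgeSet \ F.edgeSet) else 0) * f n F' := by
        simp_rw [sum_mul]
        exact sum_comm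
    _ = f n G := by
        simp_rw [SimpleGraph.sum_Icc_neg_one_pow_card_edgeSet_sdiff, ite_mul, one_mul, zero_mul]
        exact Fintype.sum_ite_eq G _

/-- The flat connection matrix `M_flat(f,k)`, with entries `f(F₁F₂)` where `F₁F₂` is the
edge-union of graphs on `[k]`, is positive semidefinite iff the Möbius transform `f†` is
nonnegative on all graphs on `[k]`. -/
theorem flat_connection_posSemidef_iff (f : ∀ n, SimpleGraph (Fin n) → ℝ) (k : ℕ) :
    (Matrix.of fun F₁ F₂ : SimpleGraph (Fin k) => f k (F₁ ⊔ F₂)).PosSemidef ↔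
      ∀ F : SimpleGraph (Fin k), 0 ≤ mobiusT f F := by
  rw [← posSemidef_zetaMatrix_mulVec_sup_iff, zetaMatrix_mulVec_mobiusT]
end
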